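/- Let f and g be degree-one lifts with translation numbers τ(f) and τ(g). Suppose h : ℝ → ℝ is a continuous function, d and N are integers, h(x+1) = h(x) + d for all x ∈ ℝ, and g(h(x)) = h(f(x)) + N for all x ∈ ℝ. Then τ(g) = d·τ(f) + N. -/
import Mathlib

open Filter Topology

theorem stmt_0 (f g : CircleDeg1Lift) (h : ℝ → ℝ) (hcont : Continuous h)
    (d N : ℤ) (hd : ∀ x : ℝ, h (x + 1) = h x + d)
    (hN : ∀ x : ℝ, g (h x) = h (f x) + N) :
    g.translationNumber = d * f.translationNumber + N := by
  -- iterate the semiconjugacy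
  have hiter : ∀ (n : ℕ) (x : ℝ), (g ^ n) (h x) = h ((f ^ n) x) + n * N := by
    intro n
    induction n with
    | zero => intro x; simp
    | succ n ih =>
      intro x
      have h1 : (g ^ (n + 1)) (h x) = (g ^ n) (g (h x)) := by
        rw [pow_succ, CircleDeg1Lift.mul_apply]
      rw [h1, hN x, (g ^ n).map_add_int, ih (f x)]
      have h2 : (f ^ (n + 1)) x = (f ^ n) (f x) := by
        rw [pow_succ, CircleDeg1Lift.mul_apply]
      rw [h2]
      push_cast
      ring
  -- the periodic part of h is bounded
  set φ : ℝ → ℝ := fun x => h x - d * x with hφ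
  have hper : Function.Periodic φ 1 := by
    intro x
    simp only [hφ, hd x]
    ring
  have hφc : Continuous φ := hcont.sub (continuous_const.mul continuous_id)
  obtain ⟨C, hC⟩ : ∃ C, ∀ x ∈ Set.Icc (0:ℝ) 1, ‖φ x‖ ≤ C :=
    isCompact_Icc.exists_bound_of_continuousOn hφc.continuousOn
  have hCb : ∀ x : ℝ, ‖φ x‖ ≤ C := by
    intro x
    have h1 : φ (Int.fract x) = φ x := by
      have := hper.sub_int_mul_eq (f := φ) (x := x) ⌊x⌋
      simpa [Int.fract, sub_eq_add_neg] using this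
    rw [← h1]
    exact hC _ ⟨Int.fract_nonneg x, (Int.fract_lt_one x).le⟩
  -- compute the limit of (g^n (h 0) - h 0) / n
  have hf0 : Tendsto (fun n : ℕ => ((f ^ n) 0 - 0) / n) atTop (𝓝 f.translationNumber) :=
    f.tendsto_translationNumber 0
  have hφ0 : Tendsto (fun n : ℕ => φ ((f ^ n) 0) / n) atTop (𝓝 0) := by
    apply squeeze_zero_norm (fun n => ?_) (tendsto_const_div_atTop_nhds_zero_nat C)
    rcases Nat.eq_zero_or_pos n with rfl | hn
    · simp
    · rw [norm_div, Real.norm_natCast]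
      gcongr
      exact hCb _
  have hh0 : Tendsto (fun n : ℕ => (h 0 : ℝ) / n) atTop (𝓝 0) :=
    tendsto_const_div_atTop_nhds_zero_nat _
  have hmain : Tendsto (fun n : ℕ => ((g ^ n) (h 0) - h 0) / n) atTop
      (𝓝 (d * f.translationNumber + N)) := by
    have key : ∀ n : ℕ, ((g ^ n) (h 0) - h 0) / n
        = d * (((f ^ n) 0 - 0) / n) + φ ((f ^ n) 0) / n - h 0 / n + (n : ℝ) / n * N := by
      intro n
      rw [hiter n 0]
      have : h ((f ^ n) 0) = d * ((f ^ n) 0) + φ ((f ^ n) 0) := by simp [hφ]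
      rw [this]
      ring
    have hlim : Tendsto (fun n : ℕ =>
        d * (((f ^ n) 0 - 0) / n) + φ ((f ^ n) 0) / n - h 0 / n + (n : ℝ) / n * N) atTop
        (𝓝 (d * f.translationNumber + 0 - 0 + 1 * N)) := by
      refine Tendsto.add (Tendsto.sub (Tendsto.add (hf0.const_mul _) hφ0) hh0) ?_
      exact (tendsto_natCast_div_add_atTop (0:ℝ)).congr (by simp) |>.mul_const _
    have := hlim
    rw [show (d : ℝ) * f.translationNumber + 0 - 0 + 1 * N
        = d * f.translationNumber + N by ring] at this
    exact this.congr fun n => (key n).symm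
  exact tendsto_nhds_unique (g.tendsto_translationNumber (h 0)) hmain
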